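/- Let 0 < q ≤ 1. Suppose the m×n matrix A satisfies: for all x and all K ⊆ T (|T| = t, K the index set of the k largest entries of x_T), ‖x_K‖_q^q ≤ D‖Ax‖_p^q + β σ_k(x_T)_q^q with D > 0 and 0 < β < 1. Then for all vectors y, x ∈ ℝⁿ, ‖(y−x)_T‖_q^q ≤ ((1+β)/(1−β))(‖y_T‖_q^q − ‖x_T‖_q^q + 2σ_k(x_T)_q^q) + (2D/(1−β))‖A(y−x)‖_p^q. -/

import Mathlib

open Finset Matrix

/-- `x` restricted to index set `S` (zero outside `S`). -/
noncomputable def restr {n : ℕ} (S : Finset (Fin n)) (x : Fin n → ℝ) : Fin n → ℝ :=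
  fun j => if j ∈ S then x j else 0

/-- The `ℓ_p` (quasi)norm `(∑ |x_j|^p)^{1/p}`. -/
noncomputable def lnorm {n : ℕ} (p : ℝ) (x : Fin n → ℝ) : ℝ :=
  (∑ j, |x j| ^ p) ^ (1 / p)

/-- The `q`-th power of the `ℓ_q` quasinorm, `∑ |x_j|^q`. -/
noncomputable def lqq {n : ℕ} (q : ℝ) (x : Fin n → ℝ) : ℝ :=
  ∑ j, |x j| ^ q

/-- `K ⊆ T` is an index set of `k` largest-in-magnitude coefficients of `x` on `T`. -/
def IsLargest {n : ℕ} (x : Fin n → ℝ) (T K : Finset (Fin n)) (k : ℕ) : Prop :=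
  K ⊆ T ∧ K.card = k ∧ ∀ i ∈ K, ∀ j ∈ T \ K, |x j| ≤ |x i|

/-- Number of nonzero entries (the `ℓ_0` "norm"). -/
noncomputable def spt {n : ℕ} (x : Fin n → ℝ) : ℕ := (Function.support x).ncard

/-- `t`-truncated `(l_r,l_q)-l_p` sparse approximation property of order `k`
with constants `D` and `β`. -/
def TruncSAP {m n : ℕ} (A : Matrix (Fin m) (Fin n) ℝ) (t k : ℕ) (r q p D β : ℝ) : Prop :=
  ∀ (x : Fin n → ℝ) (T K : Finset (Fin n)), T.card = t → IsLargest x T K k →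
    lnorm r (restr K x) ^ q ≤
      D * lnorm p (A.mulVec x) ^ q + β * (k : ℝ) ^ (q / r - 1) * lqq q (restr (T \ K) x)

lemma lqq_restr {n : ℕ} (q : ℝ) (hq : q ≠ 0) (S : Finset (Fin n)) (x : Fin n → ℝ) :
    lqq q (restr S x) = ∑ j ∈ S, |x j| ^ q := by
  unfold lqq restr
  rw [← Finset.sum_filter_add_sum_filter_not Finset.univ (· ∈ S)]
  have h1 : ∀ j ∈ Finset.univ.filter (· ∈ S), |(if j ∈ S then x j else 0)| ^ q = |x j| ^ q := by
    intro j hj; simp at hj; simp [hj]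
  have h2 : ∀ j ∈ Finset.univ.filter (¬ · ∈ S), |(if j ∈ S then x j else 0)| ^ q = 0 := by
    intro j hj; simp at hj; simp [hj, Real.zero_rpow hq]
  rw [Finset.sum_congr rfl h1, Finset.sum_congr rfl h2]
  simp [Finset.filter_mem_eq_inter]

lemma rpow_abs_add_le (a b q : ℝ) (hq0 : 0 < q) (hq1 : q ≤ 1) :
    |a + b| ^ q ≤ |a| ^ q + |b| ^ q := by
  have h := NNReal.rpow_add_le_add_rpow (Real.nnabs a) (Real.nnabs b) hq0.le hq1
  calc |a + b| ^ q ≤ (|a| + |b|) ^ q :=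
        Real.rpow_le_rpow (abs_nonneg _) (abs_add_le a b) hq0.le
    _ ≤ |a| ^ q + |b| ^ q := by
        have := NNReal.coe_le_coe.2 h
        push_cast at this
        simpa [Real.coe_nnabs, ← NNReal.coe_rpow] using this

lemma exists_largest {n : ℕ} (f : Fin n → ℝ) (T : Finset (Fin n)) (k : ℕ)
    (hk : k ≤ T.card) : ∃ K, IsLargest f T K k := by
  induction k with
  | zero => exact ⟨∅, by simp [IsLargest]⟩
  | succ k ih =>
    obtain ⟨K, hKT, hKc, hKm⟩ := ih (le_trans (Nat.le_succ k) hk)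
    have hne : (T \ K).Nonempty := by
      rw [← Finset.card_pos, Finset.card_sdiff_of_subset hKT, hKc]
      omega
    obtain ⟨j, hj, hjmax⟩ := Finset.exists_max_image (T \ K) (fun i => |f i|) hne
    refine ⟨insert j K, ?_, ?_, ?_⟩
    · exact Finset.insert_subset (Finset.mem_sdiff.1 hj).1 hKT
    · rw [Finset.card_insert_of_notMem (Finset.mem_sdiff.1 hj).2, hKc]
    · intro i hi j' hj'
      have hj'' : j' ∈ T \ K := by
        rw [Finset.mem_sdiff] at hj' ⊢
        exact ⟨hj'.1, fun h => hj'.2 (Finset.mem_insert_of_mem h)⟩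
      rcases Finset.mem_insert.1 hi with h | h
      · subst h; exact hjmax j' hj''
      · exact hKm i h j' hj''

/-- If `K'` contains `k` largest entries of `f` on `T` and `S ⊆ T` with `|S| = k`,
then the `g`-sum over `S` is at most that over `K'` (for `g` monotone in `|f|`, nonneg). -/
lemma sum_le_sum_largest {n : ℕ} (f : Fin n → ℝ) (q : ℝ) (hq0 : 0 < q)
    (T S K' : Finset (Fin n)) (hS : S ⊆ T) (hK' : K' ⊆ T) (hcard : S.card = K'.card)
    (hmax : ∀ i ∈ K', ∀ j ∈ T \ K', |f j| ≤ |f i|) :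
    ∑ j ∈ S, |f j| ^ q ≤ ∑ j ∈ K', |f j| ^ q := by
  have hdecS : ∑ j ∈ S, |f j| ^ q = ∑ j ∈ S ∩ K', |f j| ^ q + ∑ j ∈ S \ K', |f j| ^ q := by
    rw [Finset.sum_inter_add_sum_sdiff]
  have hdecK : ∑ j ∈ K', |f j| ^ q = ∑ j ∈ S ∩ K', |f j| ^ q + ∑ j ∈ K' \ S, |f j| ^ q := by
    rw [Finset.inter_comm, Finset.sum_inter_add_sum_sdiff]
  rw [hdecS, hdecK]
  gcongr ?_ + ?_ <;> [skip; skip]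
  · exact le_refl _
  · -- ∑ over S \ K' ≤ ∑ over K' \ S
    have hc : (S \ K').card = (K' \ S).card := by
      have h1 := Finset.card_inter_add_card_sdiff S K'
      have h2 := Finset.card_inter_add_card_sdiff K' S
      rw [Finset.inter_comm] at h2
      omega
    rcases Finset.eq_empty_or_nonempty (S \ K') with he | hne
    · rw [he]; simp
      exact Finset.sum_nonneg fun j _ => Real.rpow_nonneg (abs_nonneg _) _
    · have hne' : (K' \ S).Nonempty := by
        rw [← Finset.card_pos, ← hc, Finset.card_pos]; exact hne
      set c : ℝ := (K' \ S).inf' hne' (fun i => |f i| ^ q) with hc_def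
      have hle1 : ∑ j ∈ S \ K', |f j| ^ q ≤ (S \ K').card • c := by
        apply Finset.sum_le_card_nsmul
        intro j hj
        apply Finset.le_inf'
        intro i hi
        have hiK : i ∈ K' := (Finset.mem_sdiff.1 hi).1
        have hjT : j ∈ T \ K' := by
          rw [Finset.mem_sdiff] at hj ⊢
          exact ⟨hS hj.1, hj.2⟩
        exact Real.rpow_le_rpow (abs_nonneg _) (hmax i hiK j hjT) hq0.le
      have hle2 : (K' \ S).card • c ≤ ∑ j ∈ K' \ S, |f j| ^ q := by
        apply Finset.card_nsmul_le_sum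
        intro i hi
        exact Finset.inf'_le _ hi
      calc ∑ j ∈ S \ K', |f j| ^ q ≤ (S \ K').card • c := hle1
        _ = (K' \ S).card • c := by rw [hc]
        _ ≤ ∑ j ∈ K' \ S, |f j| ^ q := hle2

/-- the `(l_q,l_q)-l_p` truncated sparse approximation property
implies the robust-null-space-type estimate on differences. -/
theorem stmt18 {m n : ℕ} (A : Matrix (Fin m) (Fin n) ℝ) (t k : ℕ)
    (q p D β : ℝ) (hq0 : 0 < q) (hq1 : q ≤ 1)
    (hD : 0 < D) (hβ0 : 0 < β) (hβ1 : β < 1)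
    (hSAP : ∀ (x : Fin n → ℝ) (T K : Finset (Fin n)), T.card = t →
      IsLargest x T K k →
      lqq q (restr K x) ≤ D * lnorm p (A.mulVec x) ^ q + β * lqq q (restr (T \ K) x)) :
    ∀ (y x : Fin n → ℝ) (T K : Finset (Fin n)), T.card = t → IsLargest x T K k →
      lqq q (restr T (y - x)) ≤
        (1 + β) / (1 - β) *
            (lqq q (restr T y) - lqq q (restr T x) + 2 * lqq q (restr (T \ K) x)) +
          2 * D / (1 - β) * lnorm p (A.mulVec (y - x)) ^ q := by
  intro y x T K hT hK
  obtain ⟨hKT, hKc, hKm⟩ := hK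
  set h : Fin n → ℝ := y - x with hh
  have hkT : k ≤ T.card := hKc ▸ Finset.card_le_card hKT
  obtain ⟨K', hK'T, hK'c, hK'm⟩ := exists_largest h T k hkT
  -- notations
  set E : ℝ := D * lnorm p (A.mulVec h) ^ q with hE
  have hEnn : 0 ≤ E := by
    apply mul_nonneg hD.le
    apply Real.rpow_nonneg
    apply Real.rpow_nonneg
    exact Finset.sum_nonneg fun j _ => Real.rpow_nonneg (abs_nonneg _) _
  have hrw : ∀ (S : Finset (Fin n)) (z : Fin n → ℝ),
      lqq q (restr S z) = ∑ j ∈ S, |z j| ^ q := fun S z => lqq_restr q hq0.ne' S z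
  -- sums
  have hnonneg : ∀ (z : Fin n → ℝ) (S : Finset (Fin n)), 0 ≤ ∑ j ∈ S, |z j| ^ q :=
    fun z S => Finset.sum_nonneg fun j _ => Real.rpow_nonneg (abs_nonneg _) _
  have hsplit : ∀ (z : Fin n → ℝ), ∑ j ∈ T, |z j| ^ q
      = ∑ j ∈ K, |z j| ^ q + ∑ j ∈ T \ K, |z j| ^ q := by
    intro z
    rw [← Finset.sum_inter_add_sum_sdiff T K, Finset.inter_eq_right.2 hKT]
  have hsplit' : ∑ j ∈ T, |h j| ^ q
      = ∑ j ∈ K', |h j| ^ q + ∑ j ∈ T \ K', |h j| ^ q := by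
    rw [← Finset.sum_inter_add_sum_sdiff T K', Finset.inter_eq_right.2 hK'T]
  -- SAP applied to h with K'
  have hsap : ∑ j ∈ K', |h j| ^ q ≤ E + β * ∑ j ∈ T \ K', |h j| ^ q := by
    have := hSAP h T K' hT ⟨hK'T, hK'c, hK'm⟩
    rwa [hrw, hrw] at this
  -- h_K ≤ h_{K'}
  have hcmp : ∑ j ∈ K, |h j| ^ q ≤ ∑ j ∈ K', |h j| ^ q :=
    sum_le_sum_largest h q hq0 T K K' hKT hK'T (by rw [hKc, hK'c]) hK'm
  -- h_{T\K'} ≤ h_{T\K}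
  have hcmp2 : ∑ j ∈ T \ K', |h j| ^ q ≤ ∑ j ∈ T \ K, |h j| ^ q := by
    have := hsplit h
    linarith [hsplit']
  -- reverse triangle facts
  have htri1 : ∀ j ∈ K, |x j| ^ q ≤ |y j| ^ q + |h j| ^ q := by
    intro j _
    have : |x j| ^ q = |y j + (-h j)| ^ q := by
      have : x j = y j + (-h j) := by simp [hh]
      rw [this]
    rw [this]
    calc |y j + (-h j)| ^ q ≤ |y j| ^ q + |(-h j)| ^ q :=
          rpow_abs_add_le _ _ q hq0 hq1
      _ = |y j| ^ q + |h j| ^ q := by rw [abs_neg]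
  have htri2 : ∀ j ∈ T \ K, |h j| ^ q ≤ |y j| ^ q + |x j| ^ q := by
    intro j _
    have : |h j| ^ q = |y j + (-x j)| ^ q := by
      have : h j = y j + (-x j) := by simp [hh, sub_eq_add_neg]
      rw [this]
    rw [this]
    calc |y j + (-x j)| ^ q ≤ |y j| ^ q + |(-x j)| ^ q :=
          rpow_abs_add_le _ _ q hq0 hq1
      _ = |y j| ^ q + |x j| ^ q := by rw [abs_neg]
  have hs1 : ∑ j ∈ K, |x j| ^ q ≤ ∑ j ∈ K, |y j| ^ q + ∑ j ∈ K, |h j| ^ q := by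
    rw [← Finset.sum_add_distrib]
    exact Finset.sum_le_sum htri1
  have hs2 : ∑ j ∈ T \ K, |h j| ^ q ≤ ∑ j ∈ T \ K, |y j| ^ q + ∑ j ∈ T \ K, |x j| ^ q := by
    rw [← Finset.sum_add_distrib]
    exact Finset.sum_le_sum htri2
  -- abbreviations
  set M := ∑ j ∈ K, |h j| ^ q
  set N := ∑ j ∈ T \ K, |h j| ^ q
  set σ := ∑ j ∈ T \ K, |x j| ^ q
  set Δ := (∑ j ∈ T, |y j| ^ q) - (∑ j ∈ T, |x j| ^ q) + 2 * σ with hΔ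
  have hNΔ : N ≤ Δ + M := by
    have h1 := hsplit y
    have h2 := hsplit x
    linarith
  have hME : M ≤ E + β * N := le_trans hcmp (le_trans hsap (by nlinarith))
  have hN : (1 - β) * N ≤ Δ + E := by nlinarith
  have hNnn : 0 ≤ N := hnonneg h (T \ K)
  have hMnn : 0 ≤ M := hnonneg h K
  -- goal rewrite
  rw [hrw, hrw, hrw, hrw, hsplit h]
  have hβ : 0 < 1 - β := by linarith
  rw [div_mul_eq_mul_div, div_mul_eq_mul_div, ← hΔ]
  rw [← add_div, le_div_iff₀ hβ]
  have : 2 * D * lnorm p (A.mulVec h) ^ q = 2 * E := by rw [hE]; ring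
  rw [this]
  nlinarith [mul_le_mul_of_nonneg_left hN (le_of_lt (by linarith : (0:ℝ) < 1 + β))]
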